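/- arXiv:1407.4913 — 2 statements merged into one kernel-verified Lean document; each statement's English description precedes it below -/
import Mathlib

section
/- Let ψ be a branching mechanism of Lévy–Khintchine form with δ > 1, and set Φ₂(λ) = (2·(ψ′(ψ^{−1}(λ)) − α))^{1/2} for λ ≥ 0. Let (Ω, 𝓕, P) be a probability space carrying a family (S_r)_{r ∈ [0,∞)} of nonnegative random variables such that E[exp(−λ·S_r)] = exp(−r·Φ₂(λ)) for all λ, r ∈ [0,∞). Let (ρ_n)_{n≥1} be a sequence with ρ_n ∈ (0, r₀/8) for all n, ρ_{n+1} ≤ e^{−n}·ρ_n for all n ≥ 1, and sup_{n≥1} n^{−2}·log(1/ρ_n) < ∞. Then: (i) Σ_{n≥1} P(S_{2ρ_n} ≤ g(8ρ_n)) = ∞; and (ii) P-almost surely, limsup_{n→∞} S_{2ρ_{n+1}}/g(8ρ_n) < ∞. -/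
open MeasureTheory Filter Set

noncomputable section

/-- The branching mechanism `ψ(λ) = αλ + βλ² + ∫_{(0,∞)} (e^{−λr} − 1 + λr) π(dr)`. -/
def psiFun (α β : ℝ) (π : Measure ℝ) : ℝ → ℝ := fun l =>
  α * l + β * l ^ 2 + ∫ r, (Real.exp (-(l * r)) - 1 + l * r) ∂π

/-- `ψ′(λ) = α + 2βλ + ∫_{(0,∞)} r(1 − e^{−λr}) π(dr)`. -/
def psiDeriv (α β : ℝ) (π : Measure ℝ) : ℝ → ℝ := fun l =>
  α + 2 * β * l + ∫ r, r * (1 - Real.exp (-(l * r))) ∂π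

/-- `(α, β, π)` is the datum of a (sub)critical branching mechanism of
Lévy–Khintchine form: `α, β ≥ 0`, `π` is a Borel measure carried by `(0,∞)`
with `∫ min(r, r²) π(dr) < ∞`. -/
structure IsBranchingMechanism (α β : ℝ) (π : Measure ℝ) : Prop where
  alpha_nonneg : 0 ≤ α
  beta_nonneg : 0 ≤ β
  carried_on_pos : π (Set.Iic 0) = 0
  integ_min : Integrable (fun r => min r (r ^ 2)) π

/-- The lower index `γ_f = sup {c ≥ 0 : f(λ)λ^{−c} → ∞}` (with `sup ∅ = 0`). -/
def lowerIndex (f : ℝ → ℝ) : ℝ :=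
  sSup {c : ℝ | 0 ≤ c ∧ Tendsto (fun l : ℝ => f l * l ^ (-c)) atTop atTop}

/-- The upper index `η_f = inf {c ≥ 0 : f(λ)λ^{−c} → 0}`. -/
def upperIndex (f : ℝ → ℝ) : ℝ :=
  sInf {c : ℝ | 0 ≤ c ∧ Tendsto (fun l : ℝ => f l * l ^ (-c)) atTop (nhds 0)}

/-- `δ_f = sup {c ≥ 0 : ∃ C > 0, ∀ 1 ≤ μ ≤ λ, C f(μ)μ^{−c} ≤ f(λ)λ^{−c}}`. -/
def deltaIndex (f : ℝ → ℝ) : ℝ :=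
  sSup {c : ℝ | 0 ≤ c ∧ ∃ C : ℝ, 0 < C ∧
    ∀ μ l : ℝ, 1 ≤ μ → μ ≤ l → C * (f μ * μ ^ (-c)) ≤ f l * l ^ (-c)}

/-- `r₀ = min(α^{−1/2}, e^{−e})`, with the convention `α^{−1/2} = ∞` when `α = 0`. -/
def gaugeR0 (α : ℝ) : ℝ :=
  if α = 0 then Real.exp (-Real.exp 1)
  else min (α ^ (-(1 : ℝ) / 2)) (Real.exp (-Real.exp 1))

/-- The gauge function `g(r) = log log(1/r) / φ^{−1}(((1/r)·log log(1/r))²)`,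
expressed through the inverse `φ^{−1}` of `φ = ψ′ ∘ ψ^{−1}`. -/
def gaugeFun (φinv : ℝ → ℝ) : ℝ → ℝ := fun r =>
  Real.log (Real.log (1 / r)) / φinv ((1 / r * Real.log (Real.log (1 / r))) ^ 2)

/-!
Write `t = log (1 / (8ρ))`, `L = log t` and `λ = φ⁻¹((L / (8ρ))²)`, so that `g(8ρ) = L / λ` and
`Φ₂(λ) = √(2(L² / (8ρ)² - α)) ≤ 2L / (8ρ)`. Testing `e^{-λS}` against the events `{S ≤ x}` and
`{S > x}` gives

* `P(S_{2ρ} ≤ g(8ρ)) ≥ E e^{-λ S_{2ρ}} - e^{-L} ≥ e^{-L/2} - e^{-L} ≥ 1 / (3√t)`; along `ρ_n`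
  we have `t ≤ M n²`, so these probabilities are at least `c / n` and their sum diverges;
* `P(S_{2ρ'} > g(8ρ)) ≤ (1 - e^{-2ρ'Φ₂(λ)}) / (1 - e^{-L}) ≤ (ρ' / ρ) L`; for `ρ = ρ_n`,
  `ρ' = ρ_{n+1} ≤ e^{-n} ρ_n` this is at most `M n² e^{-n}`, which is summable, and Borel–Cantelli
  gives `S_{2ρ_{n+1}} ≤ g(8ρ_n)` for all large `n`.
-/

lemma ENNReal.tsum_eq_top_of_div_natCast_succ_le {f : ℕ → ENNReal} {c : ℝ} (hc : 0 < c)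
    (h : ∀ n : ℕ, c / (n + 1) ≤ (f n).toReal) : ∑' n, f n = ⊤ := by
  by_contra hf
  have hsum : Summable fun n : ℕ => c / ((n + 1 : ℕ) : ℝ) :=
    (ENNReal.summable_toReal hf).of_nonneg_of_le (fun n => by positivity)
      fun n => by exact_mod_cast h n
  refine Real.not_summable_one_div_natCast ((summable_nat_add_iff 1).1 ?_)
  simpa [div_eq_mul_inv, hc.ne'] using hsum.mul_left c⁻¹

lemma MeasureTheory.ae_eventually_notMem_of_summable_measureReal {α : Type*}
    [MeasurableSpace α] {μ : Measure α} [IsFiniteMeasure μ] {s : ℕ → Set α}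
    (hs : Summable fun n => μ.real (s n)) : ∀ᵐ x ∂μ, ∀ᶠ n in atTop, x ∉ s n := by
  refine ae_eventually_notMem
    (ne_of_eq_of_ne ?_ (ENNReal.ofReal_ne_top (r := ∑' n, μ.real (s n))))
  rw [ENNReal.ofReal_tsum_of_nonneg (fun n => measureReal_nonneg) hs]
  exact tsum_congr fun n => (ofReal_measureReal).symm

lemma exists_forall_div_le_of_eventually_le {f g : ℕ → ℝ} (hf : ∀ n, 0 ≤ f n)
    (h : ∀ᶠ n in atTop, f n ≤ g n) : ∃ M, ∀ n, f n / g n ≤ M := by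
  have hb : IsBoundedUnder (· ≤ ·) atTop fun n => f n / g n :=
    ⟨1, h.mono fun n hn => div_le_one_of_le₀ hn ((hf n).trans hn)⟩
  obtain ⟨M, hM⟩ := hb.bddAbove_range
  exact ⟨M, fun n => hM ⟨n, rfl⟩⟩

section

open Real

lemma exp_neg_mul_le_one {lam x : ℝ} (hlam : 0 ≤ lam) (hx : 0 ≤ x) :
    exp (-(lam * x)) ≤ 1 :=
  exp_le_one_iff.2 (neg_nonpos.2 (mul_nonneg hlam hx))

lemma one_div_three_mul_sqrt_le_exp_sub {t : ℝ} (ht : exp 1 ≤ t) :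
    1 / (3 * √t) ≤ exp (-(log t / 2)) - exp (-log t) := by
  have ht0 : 0 < t := (exp_pos 1).trans_le ht
  have hu : 3 / 2 ≤ √t := by
    rw [le_sqrt (by norm_num) ht0.le]
    linarith [exp_one_gt_d9]
  have hexp : exp (log t / 2) = √t := by
    rw [sqrt_eq_rpow, rpow_def_of_pos ht0, mul_one_div]
  rw [exp_neg, exp_neg, hexp, exp_log ht0]
  have hsq := sq_sqrt ht0.le
  set u := √t
  rw [← hsq]
  have hu0 : 0 < u := by linarith
  field_simp
  nlinarith

section LaplaceTail

variable {Ω : Type*} [MeasurableSpace Ω] {P : Measure Ω} [IsProbabilityMeasure P]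
  {X : Ω → ℝ} {lam : ℝ}

lemma integrable_exp_neg_mul (hXm : Measurable X) (hX : ∀ ω, 0 ≤ X ω) (hlam : 0 ≤ lam) :
    Integrable (fun ω => exp (-(lam * X ω))) P :=
  .of_bound (by fun_prop) 1 <| .of_forall fun ω => by
    rw [norm_of_nonneg (exp_pos _).le]; exact exp_neg_mul_le_one hlam (hX ω)

lemma integral_exp_neg_mul_le (hXm : Measurable X) (hX : ∀ ω, 0 ≤ X ω) (hlam : 0 ≤ lam)
    (x : ℝ) : ∫ ω, exp (-(lam * X ω)) ∂P ≤ P.real {ω | X ω ≤ x} + exp (-(lam * x)) := by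
  have hA : MeasurableSet {ω | X ω ≤ x} := measurableSet_le hXm measurable_const
  have hpt : ∀ ω, exp (-(lam * X ω)) ≤ {ω | X ω ≤ x}.indicator 1 ω + exp (-(lam * x)) := by
    intro ω
    by_cases hω : X ω ≤ x
    · simp only [indicator_of_mem (show ω ∈ {ω | X ω ≤ x} from hω), Pi.one_apply]
      linarith [exp_neg_mul_le_one hlam (hX ω), exp_pos (-(lam * x))]
    · simp only [indicator_of_notMem (show ω ∉ {ω | X ω ≤ x} from hω), zero_add]
      exact exp_le_exp.2 (neg_le_neg (mul_le_mul_of_nonneg_left (not_le.1 hω).le hlam))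
  calc ∫ ω, exp (-(lam * X ω)) ∂P
      ≤ ∫ ω, ({ω | X ω ≤ x}.indicator 1 ω + exp (-(lam * x))) ∂P :=
        integral_mono (integrable_exp_neg_mul hXm hX hlam)
          ((integrable_const 1).indicator hA |>.add (integrable_const _)) hpt
    _ = P.real {ω | X ω ≤ x} + exp (-(lam * x)) := by
        rw [integral_add ((integrable_const 1).indicator hA) (integrable_const _),
          integral_indicator_one hA, integral_const, probReal_univ, one_smul]

lemma one_sub_exp_mul_measureReal_lt_le (hXm : Measurable X) (hX : ∀ ω, 0 ≤ X ω)
    (hlam : 0 ≤ lam) (x : ℝ) :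
    (1 - exp (-(lam * x))) * P.real {ω | x < X ω} ≤ 1 - ∫ ω, exp (-(lam * X ω)) ∂P := by
  have hA : MeasurableSet {ω | x < X ω} := measurableSet_lt measurable_const hXm
  have hpt : ∀ ω, {ω | x < X ω}.indicator (fun _ => 1 - exp (-(lam * x))) ω
      ≤ 1 - exp (-(lam * X ω)) := by
    intro ω
    by_cases hω : x < X ω
    · rw [indicator_of_mem (show ω ∈ {ω | x < X ω} from hω)]
      exact sub_le_sub_left (exp_le_exp.2 (neg_le_neg (mul_le_mul_of_nonneg_left hω.le hlam))) _
    · rw [indicator_of_notMem (show ω ∉ {ω | x < X ω} from hω)]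
      linarith [exp_neg_mul_le_one hlam (hX ω)]
  calc (1 - exp (-(lam * x))) * P.real {ω | x < X ω}
      = ∫ ω, {ω | x < X ω}.indicator (fun _ => 1 - exp (-(lam * x))) ω ∂P := by
        rw [integral_indicator_const _ hA, smul_eq_mul, mul_comm]
    _ ≤ ∫ ω, (1 - exp (-(lam * X ω))) ∂P :=
        integral_mono ((integrable_const _).indicator hA)
          ((integrable_const 1).sub (integrable_exp_neg_mul hXm hX hlam)) hpt
    _ = 1 - ∫ ω, exp (-(lam * X ω)) ∂P := by
        rw [integral_sub (integrable_const 1) (integrable_exp_neg_mul hXm hX hlam),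
          integral_const, probReal_univ, one_smul]

end LaplaceTail

section Gauge

variable {α r : ℝ}

lemma gaugeR0_le_exp_neg_exp (α : ℝ) : gaugeR0 α ≤ exp (-exp 1) := by
  unfold gaugeR0; split_ifs
  exacts [le_rfl, min_le_right _ _]

lemma gaugeR0_le_inv_sqrt (hα : 0 < α) : gaugeR0 α ≤ (√α)⁻¹ := by
  rw [gaugeR0, if_neg hα.ne', sqrt_eq_rpow, ← rpow_neg hα.le, neg_div]
  exact min_le_left _ _

lemma exp_one_le_log_one_div (hr : 0 < r) (h : r < gaugeR0 α) : exp 1 ≤ log (1 / r) := by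
  rw [le_log_iff_exp_le (by positivity), one_div, le_inv_comm₀ (exp_pos _) hr, ← exp_neg]
  exact (h.trans_le (gaugeR0_le_exp_neg_exp α)).le

lemma one_le_log_log_one_div (hr : 0 < r) (h : r < gaugeR0 α) : 1 ≤ log (log (1 / r)) := by
  rw [le_log_iff_exp_le (lt_of_lt_of_le (exp_pos 1) (exp_one_le_log_one_div hr h))]
  exact exp_one_le_log_one_div hr h

lemma mul_sq_lt_one_of_lt_gaugeR0 (hα : 0 ≤ α) (hr : 0 < r) (h : r < gaugeR0 α) :
    α * r ^ 2 < 1 := by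
  rcases hα.eq_or_lt with rfl | hα
  · simp
  have hr' : r * √α < 1 := by
    rw [← lt_div_iff₀ (sqrt_pos.2 hα), one_div]
    exact h.trans_le (gaugeR0_le_inv_sqrt hα)
  nlinarith [sq_sqrt hα.le, mul_pos hr (sqrt_pos.2 hα)]

lemma lt_sq_one_div_mul_log_log (hα : 0 ≤ α) (hr : 0 < r) (h : r < gaugeR0 α) :
    α < (1 / r * log (log (1 / r))) ^ 2 := by
  have hL := one_le_log_log_one_div hr h
  have : α < (1 / r) ^ 2 := by
    rw [div_pow, one_pow, lt_div_iff₀ (by positivity)]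
    exact mul_sq_lt_one_of_lt_gaugeR0 hα hr h
  calc α < (1 / r) ^ 2 := this
    _ ≤ (1 / r * log (log (1 / r))) ^ 2 := by
      rw [mul_pow]; exact le_mul_of_one_le_right (by positivity) (one_le_pow₀ hL)

end Gauge

/-- The point at which the Laplace transforms are evaluated; by definition
`gaugeFun φinv r = log (log (1 / r)) / gaugeRate φinv r`. -/
def gaugeRate (φinv : ℝ → ℝ) (r : ℝ) : ℝ := φinv ((1 / r * Real.log (Real.log (1 / r))) ^ 2)

section GaugeRate

variable {α β : ℝ} {ν : Measure ℝ} {ψinv φinv : ℝ → ℝ} {r : ℝ}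

lemma psiDeriv_gaugeRate (hα : 0 ≤ α)
    (hφinv : ∀ x : ℝ, α ≤ x → 0 ≤ φinv x ∧ psiDeriv α β ν (ψinv (φinv x)) = x)
    (hr : 0 < r) (h : r < gaugeR0 α) :
    psiDeriv α β ν (ψinv (gaugeRate φinv r)) = (1 / r * log (log (1 / r))) ^ 2 :=
  (hφinv _ (lt_sq_one_div_mul_log_log hα hr h).le).2

lemma gaugeRate_pos (hα : 0 ≤ α) (hψinv0 : ψinv 0 = 0)
    (hφinv : ∀ x : ℝ, α ≤ x → 0 ≤ φinv x ∧ psiDeriv α β ν (ψinv (φinv x)) = x)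
    (hr : 0 < r) (h : r < gaugeR0 α) : 0 < gaugeRate φinv r := by
  refine (hφinv _ (lt_sq_one_div_mul_log_log hα hr h).le).1.lt_of_ne fun h0 => ?_
  have := psiDeriv_gaugeRate (β := β) (ν := ν) hα hφinv hr h
  rw [gaugeRate, ← h0, hψinv0, show psiDeriv α β ν 0 = α by simp [psiDeriv]] at this
  exact (lt_sq_one_div_mul_log_log hα hr h).ne this

lemma gaugeRate_mul_gaugeFun (hlam : 0 < gaugeRate φinv r) :
    gaugeRate φinv r * gaugeFun φinv r = log (log (1 / r)) :=
  mul_div_cancel₀ _ hlam.ne'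

lemma sqrt_two_mul_psiDeriv_gaugeRate_sub_le (hα : 0 ≤ α)
    (hφinv : ∀ x : ℝ, α ≤ x → 0 ≤ φinv x ∧ psiDeriv α β ν (ψinv (φinv x)) = x)
    (hr : 0 < r) (h : r < gaugeR0 α) :
    √(2 * (psiDeriv α β ν (ψinv (gaugeRate φinv r)) - α)) ≤ 2 * (1 / r * log (log (1 / r))) := by
  have hK : 0 ≤ 1 / r * log (log (1 / r)) :=
    mul_nonneg (by positivity) (zero_le_one.trans (one_le_log_log_one_div hr h))
  rw [psiDeriv_gaugeRate hα hφinv hr h, sqrt_le_left (by positivity)]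
  nlinarith

end GaugeRate

section GaugeTail

variable {Ω : Type*} [MeasurableSpace Ω] {P : Measure Ω} [IsProbabilityMeasure P]
  {S : ℝ → Ω → ℝ} {α β : ℝ} {ν : Measure ℝ} {ψinv φinv : ℝ → ℝ} {ρ : ℝ}

lemma one_div_three_mul_sqrt_le_measureReal_le_gaugeFun (hα : 0 ≤ α) (hψinv0 : ψinv 0 = 0)
    (hφinv : ∀ x : ℝ, α ≤ x → 0 ≤ φinv x ∧ psiDeriv α β ν (ψinv (φinv x)) = x)
    (hSm : ∀ r : ℝ, Measurable (S r)) (hS0 : ∀ (r : ℝ) (ω : Ω), 0 ≤ S r ω)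
    (hLaplace : ∀ lam r : ℝ, 0 ≤ lam → 0 ≤ r →
      (∫ ω, exp (-(lam * S r ω)) ∂P) = exp (-(r * √(2 * (psiDeriv α β ν (ψinv lam) - α)))))
    (hρ : 0 < ρ) (h : 8 * ρ < gaugeR0 α) :
    1 / (3 * √(log (1 / (8 * ρ)))) ≤ P.real {ω | S (2 * ρ) ω ≤ gaugeFun φinv (8 * ρ)} := by
  have h8ρ : 0 < 8 * ρ := by positivity
  set L := log (log (1 / (8 * ρ)))
  set lam := gaugeRate φinv (8 * ρ)
  have hlam : 0 < lam := gaugeRate_pos hα hψinv0 hφinv h8ρ h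
  have hΦ : 2 * ρ * √(2 * (psiDeriv α β ν (ψinv lam) - α)) ≤ L / 2 := by
    have e (x : ℝ) : 2 * ρ * (2 * (1 / (8 * ρ) * x)) = x / 2 := by field_simp; ring
    exact (mul_le_mul_of_nonneg_left (sqrt_two_mul_psiDeriv_gaugeRate_sub_le hα hφinv h8ρ h)
      (by positivity)).trans_eq (e L)
  calc 1 / (3 * √(log (1 / (8 * ρ))))
      ≤ exp (-(L / 2)) - exp (-L) :=
        one_div_three_mul_sqrt_le_exp_sub (exp_one_le_log_one_div h8ρ h)
    _ ≤ exp (-(2 * ρ * √(2 * (psiDeriv α β ν (ψinv lam) - α))))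
          - exp (-(lam * gaugeFun φinv (8 * ρ))) := by
        rw [gaugeRate_mul_gaugeFun hlam]
        gcongr
    _ ≤ P.real {ω | S (2 * ρ) ω ≤ gaugeFun φinv (8 * ρ)} := by
        rw [← hLaplace lam _ hlam.le (by positivity)]
        linarith [integral_exp_neg_mul_le (P := P) (hSm (2 * ρ)) (hS0 _) hlam.le
          (gaugeFun φinv (8 * ρ))]

lemma measureReal_gaugeFun_lt_le (hα : 0 ≤ α) (hψinv0 : ψinv 0 = 0)
    (hφinv : ∀ x : ℝ, α ≤ x → 0 ≤ φinv x ∧ psiDeriv α β ν (ψinv (φinv x)) = x)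
    (hSm : ∀ r : ℝ, Measurable (S r)) (hS0 : ∀ (r : ℝ) (ω : Ω), 0 ≤ S r ω)
    (hLaplace : ∀ lam r : ℝ, 0 ≤ lam → 0 ≤ r →
      (∫ ω, exp (-(lam * S r ω)) ∂P) = exp (-(r * √(2 * (psiDeriv α β ν (ψinv lam) - α)))))
    (hρ : 0 < ρ) (h : 8 * ρ < gaugeR0 α) {ρ' : ℝ} (hρ' : 0 ≤ ρ') :
    P.real {ω | gaugeFun φinv (8 * ρ) < S (2 * ρ') ω} ≤ ρ' / ρ * log (log (1 / (8 * ρ))) := by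
  have h8ρ : 0 < 8 * ρ := by positivity
  set L := log (log (1 / (8 * ρ)))
  set lam := gaugeRate φinv (8 * ρ)
  set p := P.real {ω | gaugeFun φinv (8 * ρ) < S (2 * ρ') ω}
  have hlam : 0 < lam := gaugeRate_pos hα hψinv0 hφinv h8ρ h
  have hΦ : 2 * ρ' * √(2 * (psiDeriv α β ν (ψinv lam) - α)) ≤ ρ' / ρ * L / 2 := by
    have e (x : ℝ) : 2 * ρ' * (2 * (1 / (8 * ρ) * x)) = ρ' / ρ * x / 2 := by field_simp; ring
    exact (mul_le_mul_of_nonneg_left (sqrt_two_mul_psiDeriv_gaugeRate_sub_le hα hφinv h8ρ h)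
      (by positivity)).trans_eq (e L)
  have hhalf : 1 / 2 ≤ 1 - exp (-L) := by
    have := exp_le_exp.2 (neg_le_neg (one_le_log_log_one_div h8ρ h))
    linarith [exp_neg_one_lt_half]
  have htail := one_sub_exp_mul_measureReal_lt_le (P := P) (hSm (2 * ρ')) (hS0 _) hlam.le
    (gaugeFun φinv (8 * ρ))
  rw [gaugeRate_mul_gaugeFun hlam, hLaplace lam _ hlam.le (by positivity)] at htail
  have hp : 1 / 2 * p ≤ (1 - exp (-L)) * p := mul_le_mul_of_nonneg_right hhalf measureReal_nonneg
  linarith [add_one_le_exp (-(2 * ρ' * √(2 * (psiDeriv α β ν (ψinv lam) - α))))]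

end GaugeTail

lemma log_one_div_eight_mul_le {ρ M : ℝ} {n : ℕ} (hρ : 0 < ρ) (hn : 1 ≤ n)
    (h : ((n : ℝ))⁻¹ ^ 2 * log (1 / ρ) ≤ M) : log (1 / (8 * ρ)) ≤ M * n ^ 2 := by
  have hn : (0 : ℝ) < n := by exact_mod_cast hn
  calc log (1 / (8 * ρ)) ≤ log (1 / ρ) :=
        log_le_log (by positivity) (by gcongr; linarith)
    _ ≤ M * n ^ 2 := by rwa [inv_pow, inv_mul_le_iff₀ (by positivity), mul_comm] at h

lemma one_div_three_mul_sqrt_div_le {M t m : ℝ} (hM : 0 < M) (hm : 0 < m) (ht : 0 < t)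
    (htM : t ≤ M * m ^ 2) : 1 / (3 * √M) / m ≤ 1 / (3 * √t) :=
  calc 1 / (3 * √M) / m = 1 / (3 * √(M * m ^ 2)) := by
        rw [sqrt_mul hM.le, sqrt_sq hm.le]; field_simp
    _ ≤ 1 / (3 * √t) := by gcongr

lemma div_mul_log_le_mul_exp {ρ ρ' t M : ℝ} {n : ℕ} (hρ : 0 < ρ) (hρ' : ρ' ≤ exp (-n) * ρ)
    (ht : exp 1 ≤ t) (htM : t ≤ M * n ^ 2) : ρ' / ρ * log t ≤ M * (n ^ 2 * exp (-1 * n)) :=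
  calc ρ' / ρ * log t ≤ exp (-n) * t :=
        mul_le_mul ((div_le_iff₀ hρ).2 hρ') (log_le_self ((exp_pos 1).trans_le ht).le)
          (log_nonneg ((one_le_exp zero_le_one).trans ht)) (exp_pos _).le
    _ ≤ exp (-n) * (M * n ^ 2) := by gcongr
    _ = M * (n ^ 2 * exp (-1 * n)) := by ring_nf

end

theorem statement15_general (α β : ℝ) (π : Measure ℝ) (h : IsBranchingMechanism α β π)
    (ψinv φinv : ℝ → ℝ)
    (hψinv' : ∀ y : ℝ, 0 ≤ y → ψinv (psiFun α β π y) = y)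
    (hφinv : ∀ x : ℝ, α ≤ x → 0 ≤ φinv x ∧ psiDeriv α β π (ψinv (φinv x)) = x)
    {Ω : Type*} [MeasurableSpace Ω] (P : Measure Ω) [IsProbabilityMeasure P]
    (S : ℝ → Ω → ℝ)
    (hSmeas : ∀ r : ℝ, Measurable (S r))
    (hSnonneg : ∀ (r : ℝ) (ω : Ω), 0 ≤ S r ω)
    (hLaplace : ∀ lam r : ℝ, 0 ≤ lam → 0 ≤ r →
      (∫ ω, Real.exp (-(lam * S r ω)) ∂P)
        = Real.exp (-(r * Real.sqrt (2 * (psiDeriv α β π (ψinv lam) - α)))))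
    (ρ : ℕ → ℝ)
    (hρmem : ∀ n : ℕ, 1 ≤ n → ρ n ∈ Set.Ioo 0 (gaugeR0 α / 8))
    (hρdec : ∀ n : ℕ, 1 ≤ n → ρ (n + 1) ≤ Real.exp (-(n : ℝ)) * ρ n)
    (hρlog : ∃ M : ℝ, ∀ n : ℕ, 1 ≤ n → ((n : ℝ))⁻¹ ^ 2 * Real.log (1 / ρ n) ≤ M) :
    (∑' n : ℕ, P {ω | S (2 * ρ (n + 1)) ω ≤ gaugeFun φinv (8 * ρ (n + 1))} = ⊤) ∧
    (∀ᵐ ω ∂P, ∃ M : ℝ, ∀ n : ℕ, 1 ≤ n →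
      S (2 * ρ (n + 1)) ω / gaugeFun φinv (8 * ρ n) ≤ M) := by
  have hα := h.alpha_nonneg
  have hψinv0 : ψinv 0 = 0 := by simpa [psiFun] using hψinv' 0 le_rfl
  obtain ⟨M, hM⟩ := hρlog
  have hρ (n : ℕ) (hn : 1 ≤ n) : 0 < ρ n ∧ 8 * ρ n < gaugeR0 α :=
    ⟨(hρmem n hn).1, by linarith [(hρmem n hn).2]⟩
  have ht (n : ℕ) (hn : 1 ≤ n) : Real.exp 1 ≤ Real.log (1 / (8 * ρ n)) :=
    exp_one_le_log_one_div (by linarith [(hρ n hn).1]) (hρ n hn).2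
  have htM (n : ℕ) (hn : 1 ≤ n) : Real.log (1 / (8 * ρ n)) ≤ M * n ^ 2 :=
    log_one_div_eight_mul_le (hρ n hn).1 hn (hM n hn)
  have hM0 : 0 < M := by
    simpa using ((Real.exp_pos 1).trans_le (ht 1 le_rfl)).trans_le (htM 1 le_rfl)
  refine ⟨ENNReal.tsum_eq_top_of_div_natCast_succ_le (c := 1 / (3 * √M)) (by positivity)
    fun n => ?_, ?_⟩
  · have hn : 1 ≤ n + 1 := Nat.le_add_left 1 n
    have := one_div_three_mul_sqrt_div_le hM0 n.cast_add_one_pos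
      ((Real.exp_pos 1).trans_le (ht _ hn)) (by exact_mod_cast htM _ hn)
    exact this.trans (one_div_three_mul_sqrt_le_measureReal_le_gaugeFun hα hψinv0 hφinv hSmeas
      hSnonneg hLaplace (hρ _ hn).1 (hρ _ hn).2)
  · have hsum : Summable fun n => P.real {ω | gaugeFun φinv (8 * ρ n) < S (2 * ρ (n + 1)) ω} :=
      ((Real.summable_pow_mul_exp_neg_nat_mul 2 one_pos).mul_left M
        ).of_norm_bounded_eventually_nat <| (eventually_ge_atTop 1).mono fun n hn => by
          rw [Real.norm_of_nonneg measureReal_nonneg]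
          exact (measureReal_gaugeFun_lt_le hα hψinv0 hφinv hSmeas hSnonneg hLaplace
            (hρ n hn).1 (hρ n hn).2 (hρ (n + 1) (by omega)).1.le).trans
            (div_mul_log_le_mul_exp (hρ n hn).1 (hρdec n hn) (ht n hn) (htM n hn))
    filter_upwards [ae_eventually_notMem_of_summable_measureReal hsum] with ω hω
    obtain ⟨C, hC⟩ := exists_forall_div_le_of_eventually_le (fun n => hSnonneg _ ω)
      (hω.mono fun n hn => not_lt.1 hn)
    exact ⟨C, fun n _ => hC n⟩

/-- if δ > 1, (S_r) has Laplace exponent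
Φ₂ = (2(ψ′∘ψ^{−1} − α))^{1/2}, and (ρ_n)_{n≥1} satisfies ρ_n ∈ (0, r₀/8),
ρ_{n+1} ≤ e^{−n}ρ_n and sup_{n≥1} n^{−2} log(1/ρ_n) < ∞, then
Σ_{n≥1} P(S_{2ρ_n} ≤ g(8ρ_n)) = ∞ and P-a.s.
limsup_n S_{2ρ_{n+1}}/g(8ρ_n) < ∞. -/
theorem statement15 (α β : ℝ) (π : Measure ℝ) (h : IsBranchingMechanism α β π)
    (hδ : 1 < deltaIndex (psiFun α β π))
    (ψinv φinv : ℝ → ℝ)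
    (hψinv : ∀ x : ℝ, 0 ≤ x → 0 ≤ ψinv x ∧ psiFun α β π (ψinv x) = x)
    (hψinv' : ∀ y : ℝ, 0 ≤ y → ψinv (psiFun α β π y) = y)
    (hφinv : ∀ x : ℝ, α ≤ x → 0 ≤ φinv x ∧ psiDeriv α β π (ψinv (φinv x)) = x)
    (hφinv' : ∀ y : ℝ, 0 ≤ y → φinv (psiDeriv α β π (ψinv y)) = y)
    {Ω : Type*} [MeasurableSpace Ω] (P : Measure Ω) [IsProbabilityMeasure P]
    (S : ℝ → Ω → ℝ)
    (hSmeas : ∀ r : ℝ, Measurable (S r))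
    (hSnonneg : ∀ (r : ℝ) (ω : Ω), 0 ≤ S r ω)
    (hLaplace : ∀ lam r : ℝ, 0 ≤ lam → 0 ≤ r →
      (∫ ω, Real.exp (-(lam * S r ω)) ∂P)
        = Real.exp (-(r * Real.sqrt (2 * (psiDeriv α β π (ψinv lam) - α)))))
    (ρ : ℕ → ℝ)
    (hρmem : ∀ n : ℕ, 1 ≤ n → ρ n ∈ Set.Ioo 0 (gaugeR0 α / 8))
    (hρdec : ∀ n : ℕ, 1 ≤ n → ρ (n + 1) ≤ Real.exp (-(n : ℝ)) * ρ n)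
    (hρlog : ∃ M : ℝ, ∀ n : ℕ, 1 ≤ n → ((n : ℝ))⁻¹ ^ 2 * Real.log (1 / ρ n) ≤ M) :
    (∑' n : ℕ, P {ω | S (2 * ρ (n + 1)) ω ≤ gaugeFun φinv (8 * ρ (n + 1))} = ⊤) ∧
    (∀ᵐ ω ∂P, ∃ M : ℝ, ∀ n : ℕ, 1 ≤ n →
      S (2 * ρ (n + 1)) ω / gaugeFun φinv (8 * ρ n) ≤ M) :=
  statement15_general α β π h ψinv φinv hψinv' hφinv P S hSmeas hSnonneg hLaplace ρ hρmem hρdec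
    hρlog
end
end

section
/- Let ψ be a branching mechanism of Lévy–Khintchine form with γ > 1. For r ∈ (0, r₀) and q ≥ 1, set μ_{r,q} = φ^{−1}(q·((1/r)·log log(1/r))²). Then: (a) for all r ∈ (0, r₀) and all q ≥ 1, r²·μ_{r,q}/ψ^{−1}(μ_{r,q}) ≥ (1/4)·(log log(1/r))²; and (b) if moreover δ > 1, then for every a > δ/(δ−1) there exist C ∈ [1,∞) and r' ∈ (0, r₀), depending only on ψ and a, such that μ_{r,1} ≤ μ_{r,q} ≤ C·q^a·μ_{r,1} for all r ∈ (0, r') and all q ≥ 1. -/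
/-!
For `λ ≥ 0` the Lévy–Khintchine integrand gives `ψ(λ) ≤ λψ'(λ) ≤ 2ψ(λ)`, from the pointwise
bounds `(1 + y)e^{-y} ≤ 1` and `y(1 - e^{-y}) ≤ 2(e^{-y} - 1 + y)`. At `λ = ψ⁻¹(μ_{r,q})` we have
`ψ'(λ) = q((1/r) log log(1/r))²` and `ψ(λ) = μ_{r,q}`, so (a) is `λψ'(λ) ≤ 2ψ(λ)` rearranged.

For (b), `a > δ/(δ-1)` leaves room for some `c < δ` with `1/(c-1) + 1 < a` and a lower scaling
`C ψ(μ)μ^{-c} ≤ ψ(λ)λ^{-c}` for `1 ≤ μ ≤ λ`. At `λ₁ = ψ⁻¹(μ_{r,1}) ≤ λ_q = ψ⁻¹(μ_{r,q})`, whose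
`ψ'`-values differ by the factor `q`, the two comparisons of `ψ(λ)` with `λψ'(λ)` turn the scaling
into `λ_q^{c-1} ≤ (2q/C) λ₁^{c-1}`, hence `μ_{r,q} ≤ λ_q ψ'(λ_q) ≤ 2q(2q/C)^{1/(c-1)} μ_{r,1}`.
Small `r` makes `λ₁ ≥ 1`, so that the scaling applies.
-/

open MeasureTheory Filter Set

noncomputable section

lemma monotoneOn_Ici_zero_of_hasDerivAt {f f' : ℝ → ℝ} (hf : ∀ y, HasDerivAt f (f' y) y)
    (hf' : ∀ y, 0 < y → 0 ≤ f' y) : MonotoneOn f (Ici 0) :=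
  monotoneOn_of_hasDerivWithinAt_nonneg (convex_Ici 0)
    (HasDerivAt.continuousOn fun y _ => hf y) (fun y _ => (hf y).hasDerivWithinAt)
    (by simpa using hf')

namespace Real

lemma one_add_mul_exp_neg_le_one (y : ℝ) : (1 + y) * exp (-y) ≤ 1 := by
  have h := mul_le_mul_of_nonneg_right (add_one_le_exp y) (exp_pos (-y)).le
  rw [← exp_add, add_neg_cancel, exp_zero] at h
  linarith

lemma monotoneOn_exp_neg_sub_one_add : MonotoneOn (fun y => exp (-y) - 1 + y) (Ici 0) := by
  refine monotoneOn_Ici_zero_of_hasDerivAt (f' := fun y => 1 - exp (-y))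
    (fun y => ?_) (fun y hy => by simpa using hy.le)
  exact ((((hasDerivAt_neg y).exp).sub_const 1).add (hasDerivAt_id' y)).congr_deriv (by ring)

lemma mul_one_sub_exp_neg_le {y : ℝ} (hy : 0 ≤ y) :
    y * (1 - exp (-y)) ≤ 2 * (exp (-y) - 1 + y) := by
  have hmono : MonotoneOn (fun t => (2 + t) * exp (-t) + t - 2) (Ici 0) := by
    refine monotoneOn_Ici_zero_of_hasDerivAt (f' := fun t => 1 - (1 + t) * exp (-t))
      (fun t => ?_) (fun t _ => by linarith [one_add_mul_exp_neg_le_one t])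
    exact (((((hasDerivAt_id' t).const_add 2).mul (hasDerivAt_neg t).exp).add
      (hasDerivAt_id' t)).sub_const 2).congr_deriv (by ring)
  have := hmono self_mem_Ici hy hy
  simp only [add_zero, neg_zero, exp_zero] at this
  linarith

end Real

namespace IsBranchingMechanism

variable {α β : ℝ} {π : Measure ℝ}

lemma ae_pos (h : IsBranchingMechanism α β π) : ∀ᵐ r ∂π, 0 < r := by
  rw [ae_iff]
  simp only [not_lt]
  exact h.carried_on_pos

lemma integrable_psiDeriv_integrand (h : IsBranchingMechanism α β π) {l : ℝ} (hl : 0 ≤ l) :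
    Integrable (fun r => r * (1 - Real.exp (-(l * r)))) π := by
  refine (h.integ_min.const_mul (1 + l)).mono' (by fun_prop) ?_
  filter_upwards [h.ae_pos] with r hr
  have hexp : Real.exp (-(l * r)) ≤ 1 := Real.exp_le_one_iff.2 (by nlinarith)
  have hlin : 1 - Real.exp (-(l * r)) ≤ l * r := by linarith [Real.one_sub_le_exp_neg (l * r)]
  rw [Real.norm_of_nonneg (by nlinarith)]
  rcases le_total r 1 with hr1 | hr1
  · rw [min_eq_right (by nlinarith)]; nlinarith
  · rw [min_eq_left (by nlinarith)]
    nlinarith [Real.exp_pos (-(l * r))]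

lemma integrable_psiFun_integrand (h : IsBranchingMechanism α β π) {l : ℝ} (hl : 0 ≤ l) :
    Integrable (fun r => Real.exp (-(l * r)) - 1 + l * r) π := by
  refine ((h.integrable_psiDeriv_integrand hl).const_mul l).mono' (by fun_prop) ?_
  filter_upwards with r
  have := Real.one_add_mul_exp_neg_le_one (l * r)
  rw [Real.norm_of_nonneg (by linarith [Real.one_sub_le_exp_neg (l * r)])]
  nlinarith

lemma psiFun_le_mul_psiDeriv (h : IsBranchingMechanism α β π) {l : ℝ} (hl : 0 ≤ l) :
    psiFun α β π l ≤ l * psiDeriv α β π l := by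
  have hint : ∫ r, (Real.exp (-(l * r)) - 1 + l * r) ∂π ≤
      l * ∫ r, r * (1 - Real.exp (-(l * r))) ∂π := by
    rw [← integral_const_mul]
    refine integral_mono (h.integrable_psiFun_integrand hl)
      ((h.integrable_psiDeriv_integrand hl).const_mul l) fun r => ?_
    nlinarith [Real.one_add_mul_exp_neg_le_one (l * r)]
  simp only [psiFun, psiDeriv]
  nlinarith [h.beta_nonneg, mul_nonneg h.alpha_nonneg hl, sq_nonneg l]

lemma mul_psiDeriv_le_two_mul_psiFun (h : IsBranchingMechanism α β π) {l : ℝ} (hl : 0 ≤ l) :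
    l * psiDeriv α β π l ≤ 2 * psiFun α β π l := by
  have hint : l * ∫ r, r * (1 - Real.exp (-(l * r))) ∂π ≤
      2 * ∫ r, (Real.exp (-(l * r)) - 1 + l * r) ∂π := by
    rw [← integral_const_mul, ← integral_const_mul]
    refine integral_mono_ae ((h.integrable_psiDeriv_integrand hl).const_mul l)
      ((h.integrable_psiFun_integrand hl).const_mul 2) ?_
    filter_upwards [h.ae_pos] with r hr
    have := Real.mul_one_sub_exp_neg_le (mul_nonneg hl hr.le)
    linarith
  simp only [psiFun, psiDeriv]
  nlinarith [h.beta_nonneg, mul_nonneg h.alpha_nonneg hl, sq_nonneg l]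

lemma psiDeriv_monotoneOn (h : IsBranchingMechanism α β π) :
    MonotoneOn (psiDeriv α β π) (Ici 0) := by
  intro l₁ hl₁ l₂ hl₂ hl
  have hint : ∫ r, r * (1 - Real.exp (-(l₁ * r))) ∂π ≤
      ∫ r, r * (1 - Real.exp (-(l₂ * r))) ∂π := by
    refine integral_mono_ae (h.integrable_psiDeriv_integrand hl₁)
      (h.integrable_psiDeriv_integrand hl₂) ?_
    filter_upwards [h.ae_pos] with r hr
    have : Real.exp (-(l₂ * r)) ≤ Real.exp (-(l₁ * r)) := Real.exp_le_exp.2 (by nlinarith)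
    nlinarith
  simp only [psiDeriv]
  nlinarith [h.beta_nonneg]

lemma psiFun_monotoneOn (h : IsBranchingMechanism α β π) :
    MonotoneOn (psiFun α β π) (Ici 0) := by
  intro l₁ hl₁ l₂ hl₂ hl
  have hint : ∫ r, (Real.exp (-(l₁ * r)) - 1 + l₁ * r) ∂π ≤
      ∫ r, (Real.exp (-(l₂ * r)) - 1 + l₂ * r) ∂π := by
    refine integral_mono_ae (h.integrable_psiFun_integrand hl₁)
      (h.integrable_psiFun_integrand hl₂) ?_
    filter_upwards [h.ae_pos] with r hr
    exact Real.monotoneOn_exp_neg_sub_one_add (mul_nonneg hl₁ hr.le) (mul_nonneg hl₂ hr.le)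
      (mul_le_mul_of_nonneg_right hl hr.le)
  have hsq : l₁ ^ 2 ≤ l₂ ^ 2 := pow_le_pow_left₀ hl₁ hl 2
  simp only [psiFun]
  linarith [mul_le_mul_of_nonneg_left hl h.alpha_nonneg,
    mul_le_mul_of_nonneg_left hsq h.beta_nonneg]

end IsBranchingMechanism

lemma rpow_sub_one_le_of_lowerScaling {f g : ℝ → ℝ} {c C₀ q A B : ℝ} (hC₀ : 0 < C₀)
    (hA : 0 < A) (hB : 0 < B) (hgA : 0 < g A) (hgB : g B = q * g A)
    (hfA : A * g A ≤ 2 * f A) (hfB : f B ≤ B * g B)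
    (hscale : C₀ * (f A * A ^ (-c)) ≤ f B * B ^ (-c)) :
    C₀ * B ^ (c - 1) ≤ 2 * q * A ^ (c - 1) := by
  have hAc := Real.rpow_pos_of_pos hA c
  have hBc := Real.rpow_pos_of_pos hB c
  rw [Real.rpow_neg hA.le, Real.rpow_neg hB.le] at hscale
  have hcleared : C₀ * (f A * B ^ c) ≤ f B * A ^ c := by
    have := mul_le_mul_of_nonneg_right hscale (mul_pos hAc hBc).le
    field_simp at this
    linarith
  have hcross : C₀ * A * B ^ c * g A ≤ 2 * q * B * A ^ c * g A :=
    calc C₀ * A * B ^ c * g A = C₀ * B ^ c * (A * g A) := by ring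
      _ ≤ C₀ * B ^ c * (2 * f A) := by gcongr
      _ = 2 * (C₀ * (f A * B ^ c)) := by ring
      _ ≤ 2 * (f B * A ^ c) := by gcongr
      _ ≤ 2 * (B * g B * A ^ c) := by gcongr
      _ = 2 * q * B * A ^ c * g A := by rw [hgB]; ring
  rw [Real.rpow_sub_one hB.ne', Real.rpow_sub_one hA.ne', mul_div_assoc', mul_div_assoc',
    div_le_div_iff₀ hB hA]
  nlinarith [le_of_mul_le_mul_right hcross hgA]

lemma le_mul_of_lowerScaling {f g : ℝ → ℝ} {c C₀ q A B : ℝ} (hc : 1 < c) (hC₀ : 0 < C₀)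
    (hA : 0 < A) (hB : 0 < B) (hgA : 0 < g A) (hgB : g B = q * g A)
    (hfA : A * g A ≤ 2 * f A) (hfB : f B ≤ B * g B)
    (hscale : C₀ * (f A * A ^ (-c)) ≤ f B * B ^ (-c)) :
    f B ≤ 2 * q * (2 * q / C₀) ^ (c - 1)⁻¹ * f A := by
  have hc₁ : c - 1 ≠ 0 := by linarith
  have hpow := rpow_sub_one_le_of_lowerScaling hC₀ hA hB hgA hgB hfA hfB hscale
  have hq : 0 < q := by
    by_contra! hq
    nlinarith [mul_pos hC₀ (Real.rpow_pos_of_pos hB (c - 1)), Real.rpow_pos_of_pos hA (c - 1)]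
  have hBA : B ≤ (2 * q / C₀) ^ (c - 1)⁻¹ * A := by
    calc B = (B ^ (c - 1)) ^ (c - 1)⁻¹ := by
          rw [← Real.rpow_mul hB.le, mul_inv_cancel₀ hc₁, Real.rpow_one]
      _ ≤ (2 * q / C₀ * A ^ (c - 1)) ^ (c - 1)⁻¹ := by
          gcongr
          rw [div_mul_eq_mul_div, le_div_iff₀ hC₀]
          linarith
      _ = (2 * q / C₀) ^ (c - 1)⁻¹ * A := by
          rw [Real.mul_rpow (by positivity) (by positivity), ← Real.rpow_mul hA.le,
            mul_inv_cancel₀ hc₁, Real.rpow_one]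
  calc f B ≤ B * (q * g A) := hgB ▸ hfB
    _ ≤ (2 * q / C₀) ^ (c - 1)⁻¹ * A * (q * g A) := by gcongr
    _ = q * (2 * q / C₀) ^ (c - 1)⁻¹ * (A * g A) := by ring
    _ ≤ q * (2 * q / C₀) ^ (c - 1)⁻¹ * (2 * f A) := by gcongr
    _ = 2 * q * (2 * q / C₀) ^ (c - 1)⁻¹ * f A := by ring

section Inverses

variable {α β : ℝ} {π : Measure ℝ} {ψinv φinv : ℝ → ℝ}

lemma psiInv_phiInv_spec
    (hψinv : ∀ x : ℝ, 0 ≤ x → 0 ≤ ψinv x ∧ psiFun α β π (ψinv x) = x)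
    (hφinv : ∀ x : ℝ, α ≤ x → 0 ≤ φinv x ∧ psiDeriv α β π (ψinv (φinv x)) = x)
    {x : ℝ} (hx : α < x) :
    0 < ψinv (φinv x) ∧ psiDeriv α β π (ψinv (φinv x)) = x ∧
      psiFun α β π (ψinv (φinv x)) = φinv x := by
  obtain ⟨hφ, hderiv⟩ := hφinv x hx.le
  obtain ⟨hψ, hfun⟩ := hψinv _ hφ
  refine ⟨hψ.lt_of_ne fun h0 => ?_, hderiv, hfun⟩
  rw [← h0] at hderiv
  simp only [psiDeriv, mul_zero, add_zero, zero_mul, neg_zero, Real.exp_zero, sub_self,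
    integral_zero] at hderiv
  linarith

lemma IsBranchingMechanism.psiInv_phiInv_le (h : IsBranchingMechanism α β π)
    (hψinv : ∀ x : ℝ, 0 ≤ x → 0 ≤ ψinv x ∧ psiFun α β π (ψinv x) = x)
    (hφinv : ∀ x : ℝ, α ≤ x → 0 ≤ φinv x ∧ psiDeriv α β π (ψinv (φinv x)) = x)
    {x y : ℝ} (hx : α < x) (hxy : x ≤ y) : ψinv (φinv x) ≤ ψinv (φinv y) := by
  obtain ⟨hx₀, hx', -⟩ := psiInv_phiInv_spec hψinv hφinv hx
  obtain ⟨hy₀, hy', -⟩ := psiInv_phiInv_spec hψinv hφinv (hx.trans_le hxy)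
  rcases hxy.eq_or_lt with rfl | hlt
  · rfl
  by_contra! hgt
  have := h.psiDeriv_monotoneOn hy₀.le hx₀.le hgt.le
  linarith

lemma IsBranchingMechanism.phiInv_le_phiInv_mul (h : IsBranchingMechanism α β π)
    (hψinv : ∀ x : ℝ, 0 ≤ x → 0 ≤ ψinv x ∧ psiFun α β π (ψinv x) = x)
    (hφinv : ∀ x : ℝ, α ≤ x → 0 ≤ φinv x ∧ psiDeriv α β π (ψinv (φinv x)) = x)
    {c C₀ x q : ℝ} (hc : 1 < c) (hC₀ : 0 < C₀)
    (hscale : ∀ μ l : ℝ, 1 ≤ μ → μ ≤ l →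
      C₀ * (psiFun α β π μ * μ ^ (-c)) ≤ psiFun α β π l * l ^ (-c))
    (hxα : α < x) (hx₁ : psiDeriv α β π 1 < x) (hq : 1 ≤ q) :
    φinv x ≤ φinv (q * x) ∧ φinv (q * x) ≤ 2 * q * (2 * q / C₀) ^ (c - 1)⁻¹ * φinv x := by
  have hx : 0 < x := h.alpha_nonneg.trans_lt hxα
  have hqx : x ≤ q * x := le_mul_of_one_le_left hx.le hq
  obtain ⟨hA, hA', hAψ⟩ := psiInv_phiInv_spec hψinv hφinv hxα
  obtain ⟨hB, hB', hBψ⟩ := psiInv_phiInv_spec hψinv hφinv (hxα.trans_le hqx)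
  have hAB := h.psiInv_phiInv_le hψinv hφinv hxα hqx
  have hA₁ : 1 ≤ ψinv (φinv x) := by
    by_contra! hA₁
    have := h.psiDeriv_monotoneOn hA.le (mem_Ici.2 zero_le_one) hA₁.le
    linarith
  refine ⟨hAψ ▸ hBψ ▸ h.psiFun_monotoneOn hA.le hB.le hAB, ?_⟩
  rw [← hAψ, ← hBψ]
  exact le_mul_of_lowerScaling hc hC₀ hA hB (by rw [hA']; exact hx) (by rw [hA', hB'])
    (h.mul_psiDeriv_le_two_mul_psiFun hA.le) (h.psiFun_le_mul_psiDeriv hB.le)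
    (hscale _ _ hA₁ hAB)

end Inverses

lemma exists_lowerScaling_of_lt_deltaIndex {f : ℝ → ℝ} {t : ℝ} (ht : 0 ≤ t)
    (htδ : t < deltaIndex f) :
    ∃ c, t < c ∧ ∃ C₀ : ℝ, 0 < C₀ ∧
      ∀ μ l : ℝ, 1 ≤ μ → μ ≤ l → C₀ * (f μ * μ ^ (-c)) ≤ f l * l ^ (-c) := by
  have hne : {c : ℝ | 0 ≤ c ∧ ∃ C : ℝ, 0 < C ∧
      ∀ μ l : ℝ, 1 ≤ μ → μ ≤ l → C * (f μ * μ ^ (-c)) ≤ f l * l ^ (-c)}.Nonempty := by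
    by_contra hne
    rw [not_nonempty_iff_eq_empty] at hne
    rw [deltaIndex, hne, Real.sSup_empty] at htδ
    linarith
  obtain ⟨c, ⟨-, hscale⟩, htc⟩ := exists_lt_of_lt_csSup hne htδ
  exact ⟨c, htc, hscale⟩

lemma div_sub_one_lt_iff {s t : ℝ} (hs : 1 < s) : s / (s - 1) < t ↔ s + t < s * t := by
  rw [div_lt_iff₀ (by linarith), mul_sub, mul_one, mul_comm]
  constructor <;> intro <;> linarith

lemma exists_lowerScaling_of_div_sub_one_lt {f : ℝ → ℝ} {a : ℝ} (hδ : 1 < deltaIndex f)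
    (ha : deltaIndex f / (deltaIndex f - 1) < a) :
    ∃ c, 1 < c ∧ (c - 1)⁻¹ + 1 ≤ a ∧ ∃ C₀ : ℝ, 0 < C₀ ∧
      ∀ μ l : ℝ, 1 ≤ μ → μ ≤ l → C₀ * (f μ * μ ^ (-c)) ≤ f l * l ^ (-c) := by
  have hδa := (div_sub_one_lt_iff hδ).1 ha
  have ha₁ : 1 < a := by nlinarith
  obtain ⟨c, hac, hscale⟩ := exists_lowerScaling_of_lt_deltaIndex
    (div_nonneg (by linarith) (by linarith)) ((div_sub_one_lt_iff ha₁).2 (by linarith))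
  have hac' := (div_sub_one_lt_iff ha₁).1 hac
  have hc : 1 < c := by nlinarith
  have hc₁ : c - 1 ≠ 0 := by linarith
  refine ⟨c, hc, ?_, hscale⟩
  rw [show (c - 1)⁻¹ + 1 = c / (c - 1) by field_simp; ring]
  exact ((div_sub_one_lt_iff hc).2 (by linarith)).le

lemma two_mul_mul_rpow_le {C₀ q e a : ℝ} (hC₀ : 0 < C₀) (hq : 1 ≤ q)
    (hea : e + 1 ≤ a) :
    2 * q * (2 * q / C₀) ^ e ≤ max (2 * (2 / C₀) ^ e) 1 * q ^ a := by
  have hq₀ : 0 < q := by linarith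
  calc 2 * q * (2 * q / C₀) ^ e = 2 * (2 / C₀) ^ e * q ^ (e + 1) := by
        rw [mul_div_right_comm, Real.mul_rpow (by positivity) hq₀.le, Real.rpow_add_one hq₀.ne']
        ring
    _ ≤ max (2 * (2 / C₀) ^ e) 1 * q ^ a :=
        mul_le_mul (le_max_left _ _) (Real.rpow_le_rpow_of_exponent_le hq hea) (by positivity)
          (by positivity)

lemma gaugeR0_pos {α : ℝ} (hα : 0 ≤ α) : 0 < gaugeR0 α := by
  unfold gaugeR0
  split_ifs with h0
  · exact Real.exp_pos _
  · exact lt_min (Real.rpow_pos_of_pos (hα.lt_of_ne' h0) _) (Real.exp_pos _)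

lemma one_lt_log_log_one_div {α r : ℝ} (hr : 0 < r) (hrR : r < gaugeR0 α) :
    1 < Real.log (Real.log (1 / r)) := by
  have hre : r < Real.exp (-Real.exp 1) := by
    unfold gaugeR0 at hrR
    split_ifs at hrR
    exacts [hrR, hrR.trans_le (min_le_right _ _)]
  have h1r : Real.exp (Real.exp 1) < 1 / r := by
    rw [lt_one_div (Real.exp_pos _) hr, one_div, ← Real.exp_neg]
    exact hre
  have hlog : Real.exp 1 < Real.log (1 / r) := (Real.lt_log_iff_exp_lt (by positivity)).2 h1r
  calc 1 = Real.log (Real.exp 1) := (Real.log_exp 1).symm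
    _ < Real.log (Real.log (1 / r)) := Real.log_lt_log (Real.exp_pos 1) hlog

lemma lt_one_div_sq_of_lt_gaugeR0 {α r : ℝ} (hα : 0 ≤ α) (hr : 0 < r) (hrR : r < gaugeR0 α) :
    α < (1 / r) ^ 2 := by
  rcases hα.eq_or_lt with rfl | hα
  · positivity
  rw [gaugeR0, if_neg hα.ne'] at hrR
  have hr2 : r ^ 2 < α⁻¹ :=
    calc r ^ 2 < (α ^ (-(1 : ℝ) / 2)) ^ 2 :=
          pow_lt_pow_left₀ (hrR.trans_le (min_le_left _ _)) hr.le two_ne_zero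
      _ = α⁻¹ := by
          rw [← Real.rpow_natCast, ← Real.rpow_mul hα.le]
          norm_num [Real.rpow_neg_one]
  rw [div_pow, one_pow, lt_one_div hα (by positivity), one_div]
  exact hr2

lemma one_div_sq_le_sq_mul_log_log {α r : ℝ} (hr : 0 < r) (hrR : r < gaugeR0 α) :
    (1 / r) ^ 2 ≤ (1 / r * Real.log (Real.log (1 / r))) ^ 2 := by
  have := one_lt_log_log_one_div hr hrR
  gcongr
  exact le_mul_of_one_le_right (by positivity) this.le

lemma exists_forall_lt_sq_mul_log_log {α : ℝ} (hα : 0 ≤ α) (M : ℝ) :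
    ∃ r', 0 < r' ∧ r' < gaugeR0 α ∧ ∀ r, 0 < r → r < r' →
      M < (1 / r * Real.log (Real.log (1 / r))) ^ 2 := by
  have hR := gaugeR0_pos hα
  refine ⟨min (gaugeR0 α / 2) (1 / (|M| + 1)), by positivity,
    (min_le_left _ _).trans_lt (by linarith), fun r hr hrr' => ?_⟩
  have hrR : r < gaugeR0 α := hrr'.trans_le (min_le_left _ _) |>.trans (by linarith)
  have hM : |M| + 1 < 1 / r := by
    rw [lt_one_div (by positivity) hr]
    exact hrr'.trans_le (min_le_right _ _)
  calc M < |M| + 1 := by linarith [le_abs_self M]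
    _ ≤ (1 / r) ^ 2 := by nlinarith [abs_nonneg M]
    _ ≤ _ := one_div_sq_le_sq_mul_log_log hr hrR

lemma IsBranchingMechanism.quarter_sq_log_log_le {α β : ℝ} {π : Measure ℝ}
    (h : IsBranchingMechanism α β π) {ψinv φinv : ℝ → ℝ}
    (hψinv : ∀ x : ℝ, 0 ≤ x → 0 ≤ ψinv x ∧ psiFun α β π (ψinv x) = x)
    (hφinv : ∀ x : ℝ, α ≤ x → 0 ≤ φinv x ∧ psiDeriv α β π (ψinv (φinv x)) = x)
    {r q : ℝ} (hr : 0 < r) (hrR : r < gaugeR0 α) (hq : 1 ≤ q) :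
    (1 / 4) * Real.log (Real.log (1 / r)) ^ 2 ≤
      r ^ 2 * φinv (q * (1 / r * Real.log (Real.log (1 / r))) ^ 2)
        / ψinv (φinv (q * (1 / r * Real.log (Real.log (1 / r))) ^ 2)) := by
  set L := Real.log (Real.log (1 / r))
  have hX : α < q * (1 / r * L) ^ 2 :=
    (lt_one_div_sq_of_lt_gaugeR0 h.alpha_nonneg hr hrR).trans_le
      ((one_div_sq_le_sq_mul_log_log hr hrR).trans (le_mul_of_one_le_left (sq_nonneg _) hq))
  obtain ⟨hℓ, hderiv, hfun⟩ := psiInv_phiInv_spec hψinv hφinv hX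
  have hkey := h.mul_psiDeriv_le_two_mul_psiFun hℓ.le
  rw [hderiv, hfun] at hkey
  set ℓ := ψinv (φinv (q * (1 / r * L) ^ 2))
  rw [le_div_iff₀ hℓ]
  calc 1 / 4 * L ^ 2 * ℓ ≤ q * L ^ 2 * ℓ / 2 := by nlinarith [mul_nonneg (sq_nonneg L) hℓ.le]
    _ = r ^ 2 * (ℓ * (q * (1 / r * L) ^ 2)) / 2 := by field_simp
    _ ≤ r ^ 2 * φinv (q * (1 / r * L) ^ 2) := by nlinarith [sq_nonneg r]

theorem statement19_general (α β : ℝ) (π : Measure ℝ) (h : IsBranchingMechanism α β π)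
    (ψinv φinv : ℝ → ℝ)
    (hψinv : ∀ x : ℝ, 0 ≤ x → 0 ≤ ψinv x ∧ psiFun α β π (ψinv x) = x)
    (hφinv : ∀ x : ℝ, α ≤ x → 0 ≤ φinv x ∧ psiDeriv α β π (ψinv (φinv x)) = x) :
    (∀ r : ℝ, 0 < r → r < gaugeR0 α → ∀ q : ℝ, 1 ≤ q →
      (1 / 4) * Real.log (Real.log (1 / r)) ^ 2 ≤
        r ^ 2 * φinv (q * (1 / r * Real.log (Real.log (1 / r))) ^ 2)
          / ψinv (φinv (q * (1 / r * Real.log (Real.log (1 / r))) ^ 2))) ∧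
    (1 < deltaIndex (psiFun α β π) →
      ∀ a : ℝ, deltaIndex (psiFun α β π) / (deltaIndex (psiFun α β π) - 1) < a →
        ∃ C : ℝ, 1 ≤ C ∧ ∃ r' : ℝ, 0 < r' ∧ r' < gaugeR0 α ∧
          ∀ r : ℝ, 0 < r → r < r' → ∀ q : ℝ, 1 ≤ q →
            φinv ((1 / r * Real.log (Real.log (1 / r))) ^ 2) ≤
              φinv (q * (1 / r * Real.log (Real.log (1 / r))) ^ 2) ∧
            φinv (q * (1 / r * Real.log (Real.log (1 / r))) ^ 2) ≤
              C * q ^ a * φinv ((1 / r * Real.log (Real.log (1 / r))) ^ 2)) := by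
  refine ⟨fun r hr hrR q hq => h.quarter_sq_log_log_le hψinv hφinv hr hrR hq, fun hδ a ha => ?_⟩
  obtain ⟨c, hc, hexp, C₀, hC₀, hscale⟩ := exists_lowerScaling_of_div_sub_one_lt hδ ha
  obtain ⟨r', hr', hr'R, hlarge⟩ :=
    exists_forall_lt_sq_mul_log_log h.alpha_nonneg (max α (psiDeriv α β π 1))
  refine ⟨max (2 * (2 / C₀) ^ (c - 1)⁻¹) 1, le_max_right _ _, r', hr', hr'R,
    fun r hr hrr' q hq => ?_⟩
  have hX := hlarge r hr hrr'
  obtain ⟨hmono, hbound⟩ := h.phiInv_le_phiInv_mul hψinv hφinv hc hC₀ hscale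
    ((le_max_left _ _).trans_lt hX) ((le_max_right _ _).trans_lt hX) hq
  exact ⟨hmono, hbound.trans (mul_le_mul_of_nonneg_right (two_mul_mul_rpow_le hC₀ hq hexp)
    (hφinv _ ((le_max_left _ _).trans hX.le)).1)⟩

/-- with μ_{r,q} = φ^{−1}(q·((1/r) log log(1/r))²): (a) for all
r ∈ (0, r₀) and q ≥ 1, r²μ_{r,q}/ψ^{−1}(μ_{r,q}) ≥ (1/4)(log log(1/r))²;
(b) if δ > 1 then for every a > δ/(δ−1) there are C ≥ 1 and r′ ∈ (0, r₀) with
μ_{r,1} ≤ μ_{r,q} ≤ C q^a μ_{r,1} for all r ∈ (0, r′) and q ≥ 1. -/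
theorem statement19 (α β : ℝ) (π : Measure ℝ) (h : IsBranchingMechanism α β π)
    (hγ : 1 < lowerIndex (psiFun α β π))
    (ψinv φinv : ℝ → ℝ)
    (hψinv : ∀ x : ℝ, 0 ≤ x → 0 ≤ ψinv x ∧ psiFun α β π (ψinv x) = x)
    (hψinv' : ∀ y : ℝ, 0 ≤ y → ψinv (psiFun α β π y) = y)
    (hφinv : ∀ x : ℝ, α ≤ x → 0 ≤ φinv x ∧ psiDeriv α β π (ψinv (φinv x)) = x)
    (hφinv' : ∀ y : ℝ, 0 ≤ y → φinv (psiDeriv α β π (ψinv y)) = y) :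
    (∀ r : ℝ, 0 < r → r < gaugeR0 α → ∀ q : ℝ, 1 ≤ q →
      (1 / 4) * Real.log (Real.log (1 / r)) ^ 2 ≤
        r ^ 2 * φinv (q * (1 / r * Real.log (Real.log (1 / r))) ^ 2)
          / ψinv (φinv (q * (1 / r * Real.log (Real.log (1 / r))) ^ 2))) ∧
    (1 < deltaIndex (psiFun α β π) →
      ∀ a : ℝ, deltaIndex (psiFun α β π) / (deltaIndex (psiFun α β π) - 1) < a →
        ∃ C : ℝ, 1 ≤ C ∧ ∃ r' : ℝ, 0 < r' ∧ r' < gaugeR0 α ∧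
          ∀ r : ℝ, 0 < r → r < r' → ∀ q : ℝ, 1 ≤ q →
            φinv ((1 / r * Real.log (Real.log (1 / r))) ^ 2) ≤
              φinv (q * (1 / r * Real.log (Real.log (1 / r))) ^ 2) ∧
            φinv (q * (1 / r * Real.log (Real.log (1 / r))) ^ 2) ≤
              C * q ^ a * φinv ((1 / r * Real.log (Real.log (1 / r))) ^ 2)) :=
  statement19_general α β π h ψinv φinv hψinv hφinv
end
end
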